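/- arXiv:2106.00099 — 4 statements merged into one kernel-verified Lean document; each statement's English description precedes it below -/
import Mathlib

section
/- Let S be a nonempty finite type, q ∈ PMF S a probability mass function on S, n a positive integer and δ ∈ (0,1). Let Y_1, …, Y_n be i.i.d. random variables distributed according to q, and let q̂(s) = (1/n)·#{i ∈ {1,…,n} : Y_i = s} be the empirical distribution. Then the probability that Σ_{s∈S} |q̂(s) − q(s)| > √((2/n)·log(2·2^{|S|} / δ)) is at most δ. -/
/-! For each `A ⊆ S`, the number of samples in `A` is a sum of `n` independent indicators of mean
`q(A)`, so by Hoeffding's inequality the empirical mass of `A` exceeds `q(A)` by `ε` with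
probability at most `exp(-2nε²)`. As both distributions have total mass one, their L1 distance is
twice the excess of the empirical mass on the set where it dominates `q`; a union bound over the
`2^|S|` subsets then gives the probability bound `δ / 2`. -/

open MeasureTheory ProbabilityTheory Finset Real

section Hoeffding

variable {Ω ι S : Type*} [MeasurableSpace Ω] {μ : Measure Ω} [IsProbabilityMeasure μ]
  [MeasurableSpace S] [Fintype ι]

theorem measureReal_sum_indicator_sub_ge_le {Y : ι → Ω → S} {ν : Measure S}
    (hmeas : ∀ i, Measurable (Y i)) (hindep : iIndepFun Y μ) (hlaw : ∀ i, μ.map (Y i) = ν)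
    {B : Set S} (hB : MeasurableSet B) {ε : ℝ} (hε : 0 ≤ ε) :
    μ.real {ω | ε ≤ ∑ i, (B.indicator 1 (Y i ω) - ν.real B)}
      ≤ exp (-2 * ε ^ 2 / Fintype.card ι) := by
  have hmean (i : ι) : μ[fun ω ↦ B.indicator (1 : S → ℝ) (Y i ω)] = ν.real B := by
    rw [← integral_map (f := B.indicator 1) (hmeas i).aemeasurable
      (measurable_const.indicator hB).aestronglyMeasurable, hlaw i, integral_indicator_one hB]
  have hsubG (i : ι) : HasSubgaussianMGF (fun ω ↦ B.indicator 1 (Y i ω) - ν.real B)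
      ((‖(1 : ℝ) - 0‖₊ / 2) ^ 2) μ := by
    rw [← hmean i]
    refine hasSubgaussianMGF_of_mem_Icc
      ((measurable_const.indicator hB).comp (hmeas i)).aemeasurable (ae_of_all _ fun ω ↦ ?_)
    by_cases h : Y i ω ∈ B <;> simp [h]
  have hindep' : iIndepFun (fun i ω ↦ B.indicator (1 : S → ℝ) (Y i ω) - ν.real B) μ :=
    hindep.comp (fun _ x ↦ B.indicator 1 x - ν.real B)
      (fun _ ↦ (measurable_const.indicator hB).sub_const _)
  refine (HasSubgaussianMGF.measure_sum_ge_le_of_iIndepFun hindep' (fun i _ ↦ hsubG i)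
    hε).trans_eq ?_
  congr 1
  simp only [sub_zero, nnnorm_one, one_div, inv_pow, sum_const, card_univ, nsmul_eq_mul,
    NNReal.coe_mul, NNReal.coe_natCast, NNReal.coe_inv, NNReal.coe_pow, NNReal.coe_ofNat, neg_mul]
  ring

end Hoeffding

theorem sum_card_filter_eq_sum_indicator {ι S : Type*} [Fintype ι] [DecidableEq S]
    (y : ι → S) (A : Finset S) :
    ∑ s ∈ A, (#{i | y i = s} : ℝ) = ∑ i, (A : Set S).indicator 1 (y i) := by
  simp_rw [Finset.natCast_card_filter, Finset.sum_comm (s := A), Finset.sum_ite_eq,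
    Set.indicator_apply, Finset.mem_coe, Pi.one_apply]

theorem exists_finset_sum_abs_eq_two_mul_sum {S : Type*} [Fintype S] {f : S → ℝ}
    (hf : ∑ s, f s = 0) : ∃ A : Finset S, ∑ s, |f s| = 2 * ∑ s ∈ A, f s := by
  refine ⟨({s | 0 ≤ f s} : Finset S), ?_⟩
  have habs (x : ℝ) : |x| = 2 * (if 0 ≤ x then x else 0) - x := by
    split_ifs with hx
    · rw [abs_of_nonneg hx]; ring
    · rw [abs_of_neg (not_le.1 hx)]; ring
  simp_rw [Finset.sum_filter, habs, Finset.sum_sub_distrib, ← Finset.mul_sum, hf, sub_zero]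

theorem sum_empirical_sub_toReal_eq {S : Type*} [DecidableEq S] [MeasurableSpace S]
    [MeasurableSingletonClass S] (q : PMF S) {n : ℕ} (hn : 0 < n) (y : Fin n → S)
    (A : Finset S) :
    ∑ s ∈ A, ((1 / (n : ℝ)) * (#{i | y i = s} : ℝ) - (q s).toReal)
      = (1 / n) * ∑ i, ((A : Set S).indicator 1 (y i) - q.toMeasure.real A) := by
  rw [Finset.sum_sub_distrib, ← Finset.mul_sum, sum_card_filter_eq_sum_indicator,
    Finset.sum_sub_distrib, Finset.sum_const, Finset.card_univ, Fintype.card_fin, nsmul_eq_mul,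
    measureReal_def, q.toMeasure_apply_finset, ENNReal.toReal_sum fun s _ ↦ q.apply_ne_top s]
  field_simp

theorem exists_finset_mul_le_sum_indicator_sub {S : Type*} [Fintype S] [DecidableEq S]
    [MeasurableSpace S] [MeasurableSingletonClass S] (q : PMF S) {n : ℕ} (hn : 0 < n)
    (y : Fin n → S) {t : ℝ}
    (ht : t < ∑ s, |(1 / (n : ℝ)) * (#{i | y i = s} : ℝ) - (q s).toReal|) :
    ∃ A : Finset S,
      n * (t / 2) ≤ ∑ i, ((A : Set S).indicator 1 (y i) - q.toMeasure.real A) := by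
  have hsum : ∑ s, ((1 / (n : ℝ)) * (#{i | y i = s} : ℝ) - (q s).toReal) = 0 := by
    rw [sum_empirical_sub_toReal_eq q hn y univ]
    simp
  obtain ⟨A, hA⟩ := exists_finset_sum_abs_eq_two_mul_sum hsum
  refine ⟨A, ?_⟩
  rw [hA, sum_empirical_sub_toReal_eq q hn y A] at ht
  have hn' : (0 : ℝ) < n := Nat.cast_pos.2 hn
  field_simp at ht ⊢
  linarith

theorem empirical_distribution_l1_concentration_general
    {Ω : Type*} [MeasureSpace Ω] [IsProbabilityMeasure (ℙ : Measure Ω)]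
    {S : Type*} [Fintype S] [DecidableEq S]
    [MeasurableSpace S] [MeasurableSingletonClass S]
    (q : PMF S)
    (n : ℕ) (hn : 0 < n)
    (δ : ℝ) (hδ : δ ∈ Set.Ioo (0 : ℝ) 1)
    (Y : Fin n → Ω → S)
    (hmeas : ∀ i, Measurable (Y i))
    (hindep : iIndepFun Y ℙ)
    (hlaw : ∀ i, Measure.map (Y i) ℙ = q.toMeasure) :
    ℙ {ω | ∑ s : S,
          |(1 / (n : ℝ)) * ((Finset.univ.filter fun i : Fin n => Y i ω = s).card : ℝ)
            - (q s).toReal|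
        > Real.sqrt ((2 / (n : ℝ)) * Real.log (2 * 2 ^ (Fintype.card S) / δ))}
      ≤ ENNReal.ofReal δ := by
  obtain ⟨hδ0, hδ1⟩ := hδ
  set K : ℝ := 2 * 2 ^ Fintype.card S
  have hK : 2 ≤ K := le_mul_of_one_le_right zero_le_two (one_le_pow₀ one_le_two)
  set t := sqrt ((2 / (n : ℝ)) * log (K / δ))
  set dev : Finset S → Ω → ℝ :=
    fun A ω ↦ ∑ i, ((A : Set S).indicator 1 (Y i ω) - q.toMeasure.real A)
  have hsub : {ω | ∑ s : S, |(1 / (n : ℝ)) * (#{i | Y i ω = s} : ℝ) - (q s).toReal| > t}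
      ⊆ ⋃ A : Finset S, {ω | n * (t / 2) ≤ dev A ω} := by
    intro ω hω
    obtain ⟨A, hA⟩ := exists_finset_mul_le_sum_indicator_sub q hn (Y · ω) hω
    exact Set.mem_iUnion.2 ⟨A, hA⟩
  have htail (A : Finset S) :
      (ℙ : Measure Ω).real {ω | n * (t / 2) ≤ dev A ω} ≤ δ / K := by
    refine (measureReal_sum_indicator_sub_ge_le hmeas hindep hlaw A.measurableSet
      (by positivity)).trans_eq ?_
    have hL : 0 ≤ log (K / δ) := log_nonneg ((one_le_div hδ0).2 (by linarith))
    have ht : t ^ 2 = 2 / n * log (K / δ) := sq_sqrt (by positivity)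
    have hexponent : -2 * (n * (t / 2)) ^ 2 / Fintype.card (Fin n) = -log (K / δ) := by
      rw [Fintype.card_fin, mul_pow, div_pow, ht]
      field_simp
    rw [hexponent, exp_neg, exp_log (by positivity), inv_div]
  rw [← ofReal_measureReal]
  refine ENNReal.ofReal_le_ofReal ?_
  calc _ ≤ (ℙ : Measure Ω).real (⋃ A : Finset S, {ω | n * (t / 2) ≤ dev A ω}) :=
        measureReal_mono hsub
    _ ≤ ∑ A : Finset S, (ℙ : Measure Ω).real {ω | n * (t / 2) ≤ dev A ω} :=
        measureReal_iUnion_fintype_le _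
    _ ≤ ∑ A : Finset S, δ / K := Finset.sum_le_sum fun A _ ↦ htail A
    _ ≤ δ := by
      rw [Finset.sum_const, Finset.card_univ, Fintype.card_finset, nsmul_eq_mul, Nat.cast_pow]
      calc (2 : ℝ) ^ Fintype.card S * (δ / K) = δ / 2 := by simp only [K]; field_simp
        _ ≤ δ := by linarith

/-- L1 concentration bound for the empirical distribution of `n` i.i.d. samples from a
distribution `q` on a finite set `S`: the L1 distance between the empirical distribution and
`q` exceeds `√((2/n)·log(2·2^{|S|}/δ))` with probability at most `δ`. -/
theorem empirical_distribution_l1_concentration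
    {Ω : Type*} [MeasureSpace Ω] [IsProbabilityMeasure (ℙ : Measure Ω)]
    {S : Type*} [Fintype S] [Nonempty S] [DecidableEq S]
    [MeasurableSpace S] [MeasurableSingletonClass S]
    (q : PMF S)
    (n : ℕ) (hn : 0 < n)
    (δ : ℝ) (hδ : δ ∈ Set.Ioo (0 : ℝ) 1)
    (Y : Fin n → Ω → S)
    (hmeas : ∀ i, Measurable (Y i))
    (hindep : iIndepFun Y ℙ)
    (hlaw : ∀ i, Measure.map (Y i) ℙ = q.toMeasure) :
    ℙ {ω | ∑ s : S,
          |(1 / (n : ℝ)) * ((Finset.univ.filter fun i : Fin n => Y i ω = s).card : ℝ)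
            - (q s).toReal|
        > Real.sqrt ((2 / (n : ℝ)) * Real.log (2 * 2 ^ (Fintype.card S) / δ))}
      ≤ ENNReal.ofReal δ :=
  empirical_distribution_l1_concentration_general q n hn δ hδ Y hmeas hindep hlaw
end

section
/- Let X and A be nonempty finite types, δ' ∈ (0,1), and n : X × A → ℕ with n(x,a) ≥ 1 for every (x,a). For each (x,a) ∈ X × A, let p*(·|x,a) ∈ PMF X be a probability mass function on X, let Y^{x,a}_1, …, Y^{x,a}_{n(x,a)} be i.i.d. random variables distributed according to p*(·|x,a), and let p̂(·|x,a) be the corresponding empirical distribution, p̂(x'|x,a) = (1/n(x,a))·#{i : Y^{x,a}_i = x'} (the sample families for distinct pairs (x,a) need not be independent of each other). Then with probability at least 1 − δ', simultaneously for all (x,a) ∈ X × A: Σ_{x'∈X} |p̂(x'|x,a) − p*(x'|x,a)| ≤ √((2/n(x,a))·log(2·|X|·|A|·2^{|X|} / δ')). -/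
open MeasureTheory ProbabilityTheory Finset Real

/-!
The L1 distance between an empirical distribution `p̂` and the true distribution `p` on a
finite set is `2 * (p̂ B - p B)` for the set `B = {p̂ ≥ p}`. For each fixed `B`, the quantity
`n * (p̂ B - p B)` is a sum of `n` independent centred indicators, so Hoeffding's inequality
bounds its upper tail by `exp (-n ε² / 2)` at level `n ε / 2`. A union bound over the `2^|X|`
subsets `B` and the `|X| |A|` state-action pairs, with `ε` calibrated so that
`exp (-n ε² / 2) = δ' / (2 |X| |A| 2^|X|)`, leaves a failure probability of at most `δ' / 2`.
-/

lemma exp_neg_mul_sq_sqrt_two_div_mul_log {m c : ℝ} (hm : 0 < m) (hc : 1 ≤ c) :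
    exp (-m * √(2 / m * log c) ^ 2 / 2) = c⁻¹ := by
  rw [sq_sqrt (mul_nonneg (by positivity) (log_nonneg hc)),
    show -m * (2 / m * log c) / 2 = -log c by field_simp, exp_neg, exp_log (by positivity)]

section

variable {X : Type*} [Fintype X]

lemma sum_abs_eq_two_mul_sum_filter_nonneg {d : X → ℝ} (hd : ∑ x, d x = 0) :
    ∑ x, |d x| = 2 * ∑ x with 0 ≤ d x, d x := by
  have h : ∀ x, |d x| = 2 * (if 0 ≤ d x then d x else 0) - d x := by
    intro x
    split_ifs with h
    · rw [abs_of_nonneg h]; ring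
    · rw [abs_of_neg (not_le.mp h)]; ring
  simp only [h, sum_sub_distrib, ← mul_sum, hd, sum_filter, sub_zero]

variable [DecidableEq X] {ι : Type*} [Fintype ι]

omit [Fintype X] in
lemma sum_card_filter_eq_sum_ite_mem (f : ι → X) (B : Finset X) :
    ∑ x ∈ B, (#{i | f i = x} : ℝ) = ∑ i, if f i ∈ B then 1 else 0 := by
  simp only [card_filter, Nat.cast_sum, Nat.cast_ite, Nat.cast_one, Nat.cast_zero]
  rw [sum_comm]
  simp

lemma exists_finset_card_mul_sum_abs_empirical_sub_eq [Nonempty ι] (f : ι → X) {q : X → ℝ}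
    (hq : ∑ x, q x = 1) :
    ∃ B : Finset X, Fintype.card ι * ∑ x, |1 / Fintype.card ι * #{i | f i = x} - q x|
      = 2 * ∑ i, ((if f i ∈ B then 1 else 0) - ∑ x ∈ B, q x) := by
  set m : ℝ := (Fintype.card ι : ℝ)
  have hm : m ≠ 0 := by positivity
  set d : X → ℝ := fun x => 1 / m * #{i | f i = x} - q x
  have hd : ∑ x, d x = 0 := by
    simp [d, sum_sub_distrib, ← mul_sum, sum_card_filter_eq_sum_ite_mem, hq, m, hm]
  refine ⟨univ.filter (fun x => 0 ≤ d x), ?_⟩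
  rw [sum_abs_eq_two_mul_sum_filter_nonneg hd]
  simp only [d, sum_sub_distrib, ← sum_card_filter_eq_sum_ite_mem, ← mul_sum, sum_const,
    card_univ, nsmul_eq_mul]
  field_simp
  ring

variable [MeasurableSpace X] [MeasurableSingletonClass X]

lemma PMF.hasSubgaussianMGF_ite_mem_sub_sum (p : PMF X) (B : Finset X) :
    HasSubgaussianMGF (fun x => (if x ∈ B then 1 else 0) - ∑ x ∈ B, (p x).toReal) (1 / 4)
      p.toMeasure := by
  have hmean : ∫ x, (if x ∈ B then (1 : ℝ) else 0) ∂p.toMeasure = ∑ x ∈ B, (p x).toReal := by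
    simp [PMF.integral_eq_sum, sum_ite_mem]
  have h := hasSubgaussianMGF_of_mem_Icc (μ := p.toMeasure) (a := 0) (b := 1)
    (X := fun x => if x ∈ B then (1 : ℝ) else 0) (measurable_of_countable _).aemeasurable
    (ae_of_all _ fun x => by split_ifs <;> simp)
  rw [hmean] at h
  convert h using 1
  ext; norm_num

variable {Ω : Type*} [MeasurableSpace Ω] {μ : Measure Ω}

lemma PMF.measureReal_sum_ite_mem_sub_ge_le (p : PMF X) {Y : ι → Ω → X}
    (hY : ∀ i, AEMeasurable (Y i) μ) (hindep : iIndepFun Y μ)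
    (hlaw : ∀ i, μ.map (Y i) = p.toMeasure) (B : Finset X) {t : ℝ} (ht : 0 ≤ t) :
    μ.real {ω | t ≤ ∑ i, ((if Y i ω ∈ B then 1 else 0) - ∑ x ∈ B, (p x).toReal)}
      ≤ exp (-2 * t ^ 2 / Fintype.card ι) := by
  set g : X → ℝ := fun x => (if x ∈ B then 1 else 0) - ∑ x ∈ B, (p x).toReal
  have hsubG : ∀ i ∈ (univ : Finset ι), HasSubgaussianMGF (g ∘ Y i) (1 / 4) μ := fun i _ =>
    .of_map (hY i) (by rw [hlaw i]; exact p.hasSubgaussianMGF_ite_mem_sub_sum B)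
  refine (HasSubgaussianMGF.measure_sum_ge_le_of_iIndepFun
    (hindep.comp (fun _ => g) fun _ => measurable_of_countable g) hsubG ht).trans_eq ?_
  congr 1
  push_cast [sum_const, card_univ, nsmul_eq_mul]
  field_simp
  ring

theorem PMF.measureReal_sum_abs_empirical_sub_gt_le [IsFiniteMeasure μ] [Nonempty ι] (p : PMF X)
    {Y : ι → Ω → X} (hY : ∀ i, AEMeasurable (Y i) μ) (hindep : iIndepFun Y μ)
    (hlaw : ∀ i, μ.map (Y i) = p.toMeasure) {ε : ℝ} (hε : 0 ≤ ε) :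
    μ.real {ω | ε < ∑ x, |1 / Fintype.card ι * #{i | Y i ω = x} - (p x).toReal|}
      ≤ 2 ^ Fintype.card X * exp (-Fintype.card ι * ε ^ 2 / 2) := by
  have hp : ∑ x, (p x).toReal = 1 := by simpa using (p.integral_eq_sum fun _ => (1 : ℝ)).symm
  have hsub : {ω | ε < ∑ x, |1 / Fintype.card ι * #{i | Y i ω = x} - (p x).toReal|} ⊆
      ⋃ B : Finset X, {ω | Fintype.card ι * ε / 2 ≤
        ∑ i, ((if Y i ω ∈ B then 1 else 0) - ∑ x ∈ B, (p x).toReal)} := by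
    intro ω (hω : ε < _)
    obtain ⟨B, hB⟩ := exists_finset_card_mul_sum_abs_empirical_sub_eq (Y · ω) hp
    have hm : (0 : ℝ) < Fintype.card ι := by positivity
    simp only [Set.mem_iUnion, Set.mem_ofPred_eq]
    exact ⟨B, by linarith [mul_lt_mul_of_pos_left hω hm]⟩
  calc _ ≤ _ := measureReal_mono hsub
    _ ≤ _ := measureReal_iUnion_fintype_le _
    _ ≤ ∑ _B : Finset X, exp (-Fintype.card ι * ε ^ 2 / 2) := by
      refine sum_le_sum fun B _ => ?_
      refine (p.measureReal_sum_ite_mem_sub_ge_le hY hindep hlaw B (by positivity)).trans_eq ?_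
      congr 1
      field_simp
    _ = _ := by simp [Fintype.card_finset]

lemma MeasureTheory.one_sub_ofReal_le_of_measureReal_compl_le [IsProbabilityMeasure μ]
    {s : Set Ω} {δ : ℝ} (hδ : 0 ≤ δ) (h : μ.real sᶜ ≤ δ) :
    1 - ENNReal.ofReal δ ≤ μ s := by
  rw [tsub_le_iff_right, ← measure_univ (μ := μ)]
  exact (measure_univ_le_add_compl s).trans
    (add_le_add le_rfl ((ENNReal.le_ofReal_iff_toReal_le (measure_ne_top _ _) hδ).2 h))

end

/-- Transition-model concentration bound: for every state-action pair `(x,a)` one observes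
`n (x,a)` i.i.d. next-state samples from the true transition distribution `pstar x a` on the
finite state space `X`; with probability at least `1 - δ'`, simultaneously for all `(x,a)`,
the L1 distance between the empirical next-state distribution and `pstar x a` is at most
`√((2/n(x,a))·log(2|X||A|2^{|X|}/δ'))`. -/
theorem transition_model_concentration
    {Ω : Type*} [MeasureSpace Ω] [IsProbabilityMeasure (ℙ : Measure Ω)]
    {X A : Type*} [Fintype X] [Fintype A] [Nonempty X] [Nonempty A] [DecidableEq X]
    [MeasurableSpace X] [MeasurableSingletonClass X]
    (δ' : ℝ) (hδ' : δ' ∈ Set.Ioo (0 : ℝ) 1)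
    (n : X × A → ℕ) (hn : ∀ xa, 1 ≤ n xa)
    (pstar : X → A → PMF X)
    (Y : (x : X) → (a : A) → Fin (n (x, a)) → Ω → X)
    (hmeas : ∀ x a i, Measurable (Y x a i))
    (hindep : ∀ x a, iIndepFun (Y x a) ℙ)
    (hlaw : ∀ x a i, Measure.map (Y x a i) ℙ = (pstar x a).toMeasure) :
    1 - ENNReal.ofReal δ'
      ≤ ℙ {ω | ∀ (x : X) (a : A),
          ∑ x' : X,
            |(1 / (n (x, a) : ℝ)) *
                ((Finset.univ.filter fun i : Fin (n (x, a)) => Y x a i ω = x').card : ℝ)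
              - (pstar x a x').toReal|
          ≤ Real.sqrt ((2 / (n (x, a) : ℝ)) *
              Real.log (2 * (Fintype.card X) * (Fintype.card A) * 2 ^ (Fintype.card X) / δ'))} := by
  obtain ⟨hδ0, hδ1⟩ := hδ'
  set M : ℝ := 2 * (Fintype.card X) * (Fintype.card A) * 2 ^ (Fintype.card X)
  have hM : 1 ≤ M := by
    have hX : (1 : ℝ) ≤ Fintype.card X := by exact_mod_cast Fintype.card_pos
    have hA : (1 : ℝ) ≤ Fintype.card A := by exact_mod_cast Fintype.card_pos
    exact one_le_mul_of_one_le_of_one_le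
      (one_le_mul_of_one_le_of_one_le (one_le_mul_of_one_le_of_one_le one_le_two hX) hA)
      (one_le_pow₀ one_le_two)
  have hpair : ∀ x a, (ℙ : Measure Ω).real {ω | √(2 / n (x, a) * log (M / δ')) <
      ∑ x', |1 / (n (x, a) : ℝ) * #{i | Y x a i ω = x'} - (pstar x a x').toReal|}
        ≤ 2 ^ Fintype.card X * (δ' / M) := by
    intro x a
    have : Nonempty (Fin (n (x, a))) := ⟨⟨0, hn (x, a)⟩⟩
    have h := (pstar x a).measureReal_sum_abs_empirical_sub_gt_le
      (fun i => (hmeas x a i).aemeasurable) (hindep x a) (hlaw x a)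
      (sqrt_nonneg (2 / n (x, a) * log (M / δ')))
    rwa [Fintype.card_fin, exp_neg_mul_sq_sqrt_two_div_mul_log (by exact_mod_cast hn (x, a))
      ((one_le_div hδ0).2 (by linarith)), inv_div] at h
  refine one_sub_ofReal_le_of_measureReal_compl_le hδ0.le ?_
  calc _ ≤ (ℙ : Measure Ω).real (⋃ xa : X × A, {ω | √(2 / n xa * log (M / δ')) <
        ∑ x', |1 / (n xa : ℝ) * #{i | Y xa.1 xa.2 i ω = x'} - (pstar xa.1 xa.2 x').toReal|}) :=
        measureReal_mono fun ω hω => by simpa using hω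
    _ ≤ _ := measureReal_iUnion_fintype_le _
    _ ≤ ∑ _xa : X × A, 2 ^ Fintype.card X * (δ' / M) := sum_le_sum fun xa _ => hpair xa.1 xa.2
    _ = δ' / 2 := by
      simp only [sum_const, card_univ, Fintype.card_prod, nsmul_eq_mul, Nat.cast_mul, M]
      field_simp
    _ ≤ δ' := by linarith
end

section
/- Let X and A be nonempty finite types, d a positive integer, r_top > 0, δ' ∈ (0,1) with δ := δ'·(1 + d·2^{−|X|}) < 1, and n : X × A → ℕ with n(x,a) ≥ 1 for every (x,a). For each (x,a) ∈ X × A, let p*(·|x,a) ∈ PMF X, let p̂(·|x,a) be the empirical distribution of n(x,a) i.i.d. samples from p*(·|x,a), and for each k ∈ {0,…,d−1} let r̂_k(x,a) be the empirical mean of n(x,a) i.i.d. real-valued samples bounded in [−r_top, r_top] with mean r*_k(x,a). Define e(x,a) = √((2/n(x,a))·log(2·|X|·|A|·2^{|X|} / δ')). Then with probability at least 1 − δ, simultaneously for all (x,a) ∈ X × A: both Σ_{x'∈X} |p̂(x'|x,a) − p*(x'|x,a)| ≤ e(x,a) and, for all k ∈ {0,…,d−1}, |r̂_k(x,a) − r*_k(x,a)|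 ≤ e(x,a)·r_top. -/
open MeasureTheory ProbabilityTheory
open Real
open scoped ENNReal


lemma hoeffding_scalar (p : ℝ) (hp0 : 0 ≤ p) (hp1 : p ≤ 1) (s : ℝ) :
    p * Real.exp s + (1 - p) * Real.exp (-s) ≤ Real.exp (s^2/2 + (2*p - 1)*s) := by
  set q : ℝ := 1 - p with hq
  have hq0 : 0 ≤ q := by simp only [hq]; linarith
  set g : ℝ → ℝ := fun s => p * Real.exp s + q * Real.exp (-s) with hgdef
  have hg : ∀ s, 0 < g s := by
    intro s
    rcases eq_or_lt_of_le hp0 with h | h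
    · have hq1 : q = 1 := by simp [hq, ← h]
      simp [hgdef, ← h, hq1, Real.exp_pos]
    · have h1 : 0 < p * Real.exp s := mul_pos h (Real.exp_pos s)
      have h2 : 0 ≤ q * Real.exp (-s) := mul_nonneg hq0 (Real.exp_pos _).le
      simp only [hgdef]
      linarith
  set w : ℝ → ℝ := fun s => p * Real.exp s - q * Real.exp (-s) with hwdef
  have hexpneg : ∀ s : ℝ, HasDerivAt (fun s : ℝ => Real.exp (-s)) (-Real.exp (-s)) s := by
    intro s
    simpa [Function.comp_def] using (Real.hasDerivAt_exp (-s)).comp s (hasDerivAt_neg s)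
  have hg' : ∀ s, HasDerivAt g (w s) s := by
    intro s
    have := ((Real.hasDerivAt_exp s).const_mul p).fun_add ((hexpneg s).const_mul q)
    simpa [hgdef, hwdef, mul_comm, sub_eq_add_neg, mul_neg] using this
  have hw' : ∀ s, HasDerivAt w (g s) s := by
    intro s
    have := ((Real.hasDerivAt_exp s).const_mul p).fun_sub ((hexpneg s).const_mul q)
    simpa [hgdef, hwdef, mul_neg, sub_neg_eq_add] using this
  set m : ℝ := 2*p - 1 with hm
  set ψ : ℝ → ℝ := fun s => s + m - w s / g s with hψdef
  have hψ' : ∀ s, HasDerivAt ψ (1 - (g s * g s - w s * w s) / (g s)^2) s := by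
    intro s
    have hdiv := (hw' s).fun_div (hg' s) (hg s).ne'
    simpa [hψdef] using ((hasDerivAt_id s).add_const m).fun_sub hdiv
  have hψderiv_nonneg : ∀ s, 0 ≤ 1 - (g s * g s - w s * w s) / (g s)^2 := by
    intro s
    have h2 : (0:ℝ) < (g s)^2 := pow_pos (hg s) 2
    have : (g s * g s - w s * w s) / (g s)^2 ≤ 1 := by
      rw [div_le_one h2]
      nlinarith [sq_nonneg (w s)]
    linarith
  have hψmono : Monotone ψ := by
    apply monotone_of_deriv_nonneg
    · exact fun s => (hψ' s).differentiableAt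
    · intro s
      rw [(hψ' s).deriv]
      exact hψderiv_nonneg s
  have hψ0 : ψ 0 = 0 := by
    simp only [hψdef, hwdef, hgdef, hm, hq]
    norm_num
    ring
  set φ : ℝ → ℝ := fun s => s^2/2 + m*s - Real.log (g s) with hφdef
  have hφ' : ∀ s, HasDerivAt φ (ψ s) s := by
    intro s
    have hlog : HasDerivAt (fun s => Real.log (g s)) (w s / g s) s := by
      simpa [div_eq_mul_inv, mul_comm, Function.comp_def] using (Real.hasDerivAt_log (hg s).ne').comp s (hg' s)
    have hsq : HasDerivAt (fun s : ℝ => s^2/2 + m*s) (s + m) s := by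
      have h1 : HasDerivAt (fun s : ℝ => s^2) (2*s) s := by
        simpa using hasDerivAt_pow 2 s
      simpa [add_comm, mul_comm] using (h1.div_const 2).fun_add ((hasDerivAt_id s).const_mul m)
    simpa [hφdef, hψdef] using hsq.fun_sub hlog
  have hφ0 : φ 0 = 0 := by
    simp only [hφdef, hgdef, hq]
    norm_num
  have hφnonneg : ∀ s, 0 ≤ φ s := by
    intro s
    rcases le_or_gt 0 s with h | h
    · have hmono : MonotoneOn φ (Set.Ici 0) := by
        apply monotoneOn_of_deriv_nonneg (convex_Ici 0)
        · exact (Differentiable.continuous (fun s => ((hφ' s).differentiableAt))).continuousOn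
        · exact fun x _ => ((hφ' x).differentiableAt).differentiableWithinAt
        · intro x hx
          rw [(hφ' x).deriv]
          have : (0:ℝ) ≤ x := le_of_lt (by simpa using hx)
          calc (0:ℝ) = ψ 0 := hψ0.symm
          _ ≤ ψ x := hψmono this
      have := hmono (Set.mem_Ici.2 le_rfl) (Set.mem_Ici.2 h) h
      rw [hφ0] at this; exact this
    · have hanti : AntitoneOn φ (Set.Iic 0) := by
        apply antitoneOn_of_deriv_nonpos (convex_Iic 0)
        · exact (Differentiable.continuous (fun s => ((hφ' s).differentiableAt))).continuousOn
        · exact fun x _ => ((hφ' x).differentiableAt).differentiableWithinAt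
        · intro x hx
          rw [(hφ' x).deriv]
          have hx0 : x ≤ (0:ℝ) := le_of_lt (by simpa using hx)
          calc ψ x ≤ ψ 0 := hψmono hx0
          _ = 0 := hψ0
      have := hanti (Set.mem_Iic.2 h.le) (Set.mem_Iic.2 le_rfl) h.le
      rw [hφ0] at this; exact this
  have key := hφnonneg s
  have : Real.log (g s) ≤ s^2/2 + m*s := by
    simp only [hφdef] at key; linarith
  have := (Real.log_le_iff_le_exp (hg s)).1 this
  simpa [hgdef, hq, hm, mul_comm] using this

lemma hoeffding_mgf {Ω : Type*} [MeasurableSpace Ω] (μ : Measure Ω) [IsProbabilityMeasure μ]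
    {V : Ω → ℝ} (hV : Measurable V) {a b : ℝ} (hab : a < b)
    (hbdd : ∀ᵐ ω ∂μ, V ω ∈ Set.Icc a b) (hmean : ∫ ω, V ω ∂μ = 0) (t : ℝ) :
    mgf V μ t ≤ Real.exp (t^2*(b-a)^2/8) := by
  have hba : (0:ℝ) < b - a := by linarith
  have hVint : Integrable V μ := by
    refine Integrable.mono' (integrable_const (max |a| |b|)) hV.aestronglyMeasurable ?_
    filter_upwards [hbdd] with ω h
    rw [Real.norm_eq_abs, abs_le]
    constructor
    · have := neg_abs_le a
      have := le_max_left |a| |b|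
      linarith [h.1]
    · have := le_abs_self b
      have := le_max_right |a| |b|
      linarith [h.2]
  have hexpint : Integrable (fun ω => Real.exp (t * V ω)) μ := by
    refine Integrable.mono' (integrable_const (max (Real.exp (t*a)) (Real.exp (t*b))))
      (hV.const_mul t).exp.aestronglyMeasurable ?_
    filter_upwards [hbdd] with ω h
    rw [Real.norm_eq_abs, abs_of_pos (Real.exp_pos _)]
    rcases le_or_gt 0 t with ht | ht
    · exact le_trans (Real.exp_le_exp.2 (mul_le_mul_of_nonneg_left h.2 ht)) (le_max_right _ _)
    · exact le_trans (Real.exp_le_exp.2 (by nlinarith [h.1])) (le_max_left _ _)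
  have ha0 : a ≤ 0 := by
    have : ∫ _ω, a ∂μ ≤ ∫ ω, V ω ∂μ := by
      refine integral_mono_ae (integrable_const a) hVint ?_
      filter_upwards [hbdd] with ω h using h.1
    simpa [hmean] using this
  have hb0 : 0 ≤ b := by
    have : ∫ ω, V ω ∂μ ≤ ∫ _ω, b ∂μ := by
      refine integral_mono_ae hVint (integrable_const b) ?_
      filter_upwards [hbdd] with ω h using h.2
    simpa [hmean] using this
  -- pointwise convexity bound
  have hpt : ∀ᵐ ω ∂μ, Real.exp (t * V ω)
      ≤ (Real.exp (t*a) * (b/(b-a)) + Real.exp (t*b) * (-a/(b-a)))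
        + V ω * ((Real.exp (t*b) - Real.exp (t*a))/(b-a)) := by
    filter_upwards [hbdd] with ω h
    have hθ1 : 0 ≤ (b - V ω)/(b-a) := div_nonneg (by linarith [h.2]) hba.le
    have hθ2 : 0 ≤ (V ω - a)/(b-a) := div_nonneg (by linarith [h.1]) hba.le
    have hθ : (b - V ω)/(b-a) + (V ω - a)/(b-a) = 1 := by field_simp; ring
    have hconv := convexOn_exp.2 (Set.mem_univ (t*a)) (Set.mem_univ (t*b)) hθ1 hθ2 hθ
    simp only [smul_eq_mul] at hconv
    have harg : (b - V ω)/(b-a) * (t*a) + (V ω - a)/(b-a) * (t*b) = t * V ω := by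
      rw [div_mul_eq_mul_div, div_mul_eq_mul_div, ← add_div, div_eq_iff hba.ne']
      ring
    rw [harg] at hconv
    calc Real.exp (t * V ω) ≤ (b - V ω)/(b-a) * Real.exp (t*a) + (V ω - a)/(b-a) * Real.exp (t*b) := hconv
    _ = (Real.exp (t*a) * (b/(b-a)) + Real.exp (t*b) * (-a/(b-a)))
        + V ω * ((Real.exp (t*b) - Real.exp (t*a))/(b-a)) := by
      field_simp
      ring
  have hint : mgf V μ t ≤ Real.exp (t*a) * (b/(b-a)) + Real.exp (t*b) * (-a/(b-a)) := by
    have hrhsint : Integrable (fun ω => (Real.exp (t*a) * (b/(b-a)) + Real.exp (t*b) * (-a/(b-a)))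
        + V ω * ((Real.exp (t*b) - Real.exp (t*a))/(b-a))) μ :=
      (integrable_const _).add (hVint.mul_const _)
    have := integral_mono_ae hexpint hrhsint hpt
    rw [integral_add (integrable_const _) (hVint.mul_const _)] at this
    simp only [integral_const, measure_univ, ENNReal.toReal_one, one_smul,
      integral_mul_const, hmean, zero_mul, add_zero] at this
    simpa [mgf] using this
  set p : ℝ := -a/(b-a) with hp
  have hp0 : 0 ≤ p := div_nonneg (by linarith) hba.le
  have hp1 : p ≤ 1 := by
    rw [hp, div_le_one hba]
    linarith
  have hq : b/(b-a) = 1 - p := by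
    rw [hp]; field_simp; ring
  set s : ℝ := t*(b-a)/2 with hs
  have hscalar := hoeffding_scalar p hp0 hp1 s
  have hc := Real.exp_pos (t*(a+b)/2)
  have key : Real.exp (t*a) * (b/(b-a)) + Real.exp (t*b) * (-a/(b-a))
      ≤ Real.exp (t^2*(b-a)^2/8) := by
    have hmul := mul_le_mul_of_nonneg_left hscalar hc.le
    have hL : Real.exp (t*(a+b)/2) * (p * Real.exp s + (1-p) * Real.exp (-s))
        = Real.exp (t*a) * (b/(b-a)) + Real.exp (t*b) * (-a/(b-a)) := by
      rw [hq, hp, hs]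
      rw [mul_add, ← mul_assoc, ← mul_assoc]
      rw [mul_comm (Real.exp (t*(a+b)/2)) (-a/(b-a)), mul_comm (Real.exp (t*(a+b)/2)) (1 - -a/(b-a))]
      rw [mul_assoc, mul_assoc, ← Real.exp_add, ← Real.exp_add]
      have e1 : t*(a+b)/2 + t*(b-a)/2 = t*b := by ring
      have e2 : t*(a+b)/2 + -(t*(b-a)/2) = t*a := by ring
      rw [e1, e2]
      have : (1 : ℝ) - -a/(b-a) = b/(b-a) := by field_simp; ring
      rw [this]
      ring
    have hR : Real.exp (t*(a+b)/2) * Real.exp (s^2/2 + (2*p-1)*s)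
        = Real.exp (t^2*(b-a)^2/8) := by
      rw [← Real.exp_add]
      congr 1
      rw [hp, hs]
      field_simp
      ring
    rw [hL, hR] at hmul
    exact hmul
  exact le_trans hint key

lemma integrable_exp_mul_of_bdd {Ω : Type*} [MeasurableSpace Ω] (μ : Measure Ω)
    [IsProbabilityMeasure μ] {V : Ω → ℝ} (hV : Measurable V) {a b t : ℝ}
    (hbdd : ∀ᵐ ω ∂μ, V ω ∈ Set.Icc a b) :
    Integrable (fun ω => Real.exp (t * V ω)) μ := by
  refine Integrable.mono' (integrable_const (max (Real.exp (t*a)) (Real.exp (t*b))))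
    (hV.const_mul t).exp.aestronglyMeasurable ?_
  filter_upwards [hbdd] with ω h
  rw [Real.norm_eq_abs, abs_of_pos (Real.exp_pos _)]
  rcases le_or_gt 0 t with ht | ht
  · exact le_trans (Real.exp_le_exp.2 (mul_le_mul_of_nonneg_left h.2 ht)) (le_max_right _ _)
  · exact le_trans (Real.exp_le_exp.2 (by nlinarith [h.1])) (le_max_left _ _)

lemma hoeffding_tail {Ω : Type*} [MeasurableSpace Ω] (μ : Measure Ω) [IsProbabilityMeasure μ]
    {n : ℕ} (hn : 0 < n) (V : Fin n → Ω → ℝ) (hmeas : ∀ i, Measurable (V i))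
    (hindep : iIndepFun V μ)
    {a b : ℝ} (hab : a < b) (hbdd : ∀ i, ∀ᵐ ω ∂μ, V i ω ∈ Set.Icc a b)
    (hmean : ∀ i, ∫ ω, V i ω ∂μ = 0) {ε : ℝ} (hε : 0 ≤ ε) :
    μ {ω | ε ≤ ∑ i, V i ω} ≤ ENNReal.ofReal (Real.exp (-2*ε^2/(n*(b-a)^2))) := by
  have hba : (0:ℝ) < b - a := by linarith
  have hnpos : (0:ℝ) < n := Nat.cast_pos.2 hn
  set t : ℝ := 4*ε/(n*(b-a)^2) with htdef
  have ht : 0 ≤ t := by positivity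
  have hint : ∀ i : Fin n, Integrable (fun ω => Real.exp (t * V i ω)) μ :=
    fun i => integrable_exp_mul_of_bdd μ (hmeas i) (hbdd i)
  have hintsum : Integrable (fun ω => Real.exp (t * (∑ i, V i) ω)) μ :=
    hindep.integrable_exp_mul_sum hmeas (fun i _ => hint i)
  have hch := measure_ge_le_exp_mul_mgf (μ := μ) (X := ∑ i, V i) ε ht hintsum
  have hmgf : mgf (∑ i, V i) μ t ≤ Real.exp (n * (t^2*(b-a)^2/8)) := by
    rw [hindep.mgf_sum hmeas]
    have h1 : ∏ i : Fin n, mgf (V i) μ t ≤ ∏ _i : Fin n, Real.exp (t^2*(b-a)^2/8) :=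
      Finset.prod_le_prod (fun i _ => mgf_nonneg)
        (fun i _ => hoeffding_mgf μ (hmeas i) hab (hbdd i) (hmean i) t)
    have h2 : ∏ _i : Fin n, Real.exp (t^2*(b-a)^2/8) = Real.exp (n * (t^2*(b-a)^2/8)) := by
      rw [Finset.prod_const, ← Real.exp_nat_mul]
      simp
    rw [h2] at h1
    exact h1
  have hbound : (μ {ω | ε ≤ (∑ i, V i) ω}).toReal ≤ Real.exp (-2*ε^2/(n*(b-a)^2)) := by
    calc (μ {ω | ε ≤ (∑ i, V i) ω}).toReal ≤ Real.exp (-t * ε) * mgf (∑ i, V i) μ t := hch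
    _ ≤ Real.exp (-t * ε) * Real.exp (n * (t^2*(b-a)^2/8)) := by
      exact mul_le_mul_of_nonneg_left hmgf (Real.exp_pos _).le
    _ = Real.exp (-t * ε + n * (t^2*(b-a)^2/8)) := (Real.exp_add _ _).symm
    _ = Real.exp (-2*ε^2/(n*(b-a)^2)) := by
      congr 1
      rw [htdef]
      field_simp
      ring
  have hset : {ω | ε ≤ ∑ i, V i ω} = {ω | ε ≤ (∑ i, V i) ω} := by
    ext ω; simp [Finset.sum_apply]
  rw [hset, ENNReal.le_ofReal_iff_toReal_le (measure_ne_top μ _) (Real.exp_pos _).le]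
  exact hbound

lemma hoeffding_tail_lower {Ω : Type*} [MeasurableSpace Ω] (μ : Measure Ω) [IsProbabilityMeasure μ]
    {n : ℕ} (hn : 0 < n) (V : Fin n → Ω → ℝ) (hmeas : ∀ i, Measurable (V i))
    (hindep : iIndepFun V μ)
    {a b : ℝ} (hab : a < b) (hbdd : ∀ i, ∀ᵐ ω ∂μ, V i ω ∈ Set.Icc a b)
    (hmean : ∀ i, ∫ ω, V i ω ∂μ = 0) {ε : ℝ} (hε : 0 ≤ ε) :
    μ {ω | ∑ i, V i ω ≤ -ε} ≤ ENNReal.ofReal (Real.exp (-2*ε^2/(n*(b-a)^2))) := by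
  have h := hoeffding_tail μ hn (fun i => -(V i)) (fun i => (hmeas i).neg)
    (hindep.comp (fun _ => fun r => -r) (fun _ => measurable_neg))
    (show -b < -a by linarith)
    (fun i => by filter_upwards [hbdd i] with ω hw using
      ⟨by simpa using neg_le_neg hw.2, by simpa using neg_le_neg hw.1⟩)
    (fun i => by simp [integral_neg, hmean i]) hε
  have hs : {ω | ε ≤ ∑ i, (fun i => -(V i)) i ω} = {ω | ∑ i, V i ω ≤ -ε} := by
    ext ω
    simp only [Set.mem_setOf_eq, Pi.neg_apply, Finset.sum_neg_distrib]
    constructor <;> intro <;> linarith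
  rw [hs] at h
  have : (-a - -b) = b - a := by ring
  rw [this] at h
  exact h

lemma abs_sum_split {X : Type*} [Fintype X] (dlt : X → ℝ) (h0 : ∑ x, dlt x = 0) :
    ∑ x, |dlt x| = 2 * ∑ x ∈ Finset.univ.filter (fun x => 0 < dlt x), dlt x := by
  classical
  have hsplit := Finset.sum_filter_add_sum_filter_not Finset.univ
    (fun x => 0 < dlt x) (fun x => |dlt x|)
  have hsplit2 := Finset.sum_filter_add_sum_filter_not Finset.univ (fun x => 0 < dlt x) dlt
  have h1 : ∑ x ∈ Finset.univ.filter (fun x => 0 < dlt x), |dlt x|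
      = ∑ x ∈ Finset.univ.filter (fun x => 0 < dlt x), dlt x :=
    Finset.sum_congr rfl (fun x hx => abs_of_pos (Finset.mem_filter.1 hx).2)
  have h2 : ∑ x ∈ Finset.univ.filter (fun x => ¬ 0 < dlt x), |dlt x|
      = -∑ x ∈ Finset.univ.filter (fun x => ¬ 0 < dlt x), dlt x := by
    rw [← Finset.sum_neg_distrib]
    exact Finset.sum_congr rfl (fun x hx => abs_of_nonpos (le_of_not_gt (Finset.mem_filter.1 hx).2))
  rw [h0] at hsplit2
  linarith

lemma union_bound_fintype {Ω : Type*} [MeasurableSpace Ω] (μ : Measure Ω)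
    {ι : Type*} [Fintype ι] (s : ι → Set Ω) {c : ℝ}
    (hs : ∀ i, μ (s i) ≤ ENNReal.ofReal c) :
    μ (⋃ i, s i) ≤ ENNReal.ofReal ((Fintype.card ι : ℝ) * c) := by
  refine le_trans (measure_iUnion_le s) ?_
  rw [tsum_fintype]
  have s1 : ∑ i, μ (s i) ≤ ∑ _i : ι, ENNReal.ofReal c :=
    Finset.sum_le_sum (fun i _ => hs i)
  refine le_trans s1 (le_of_eq ?_)
  rw [Finset.sum_const, Finset.card_univ, nsmul_eq_mul, ← ENNReal.ofReal_natCast,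
    ← ENNReal.ofReal_mul (Nat.cast_nonneg _)]

lemma final_real_ineq (cX cA t δ' d : ℝ) (hcX : 1 ≤ cX) (hcA : 1 ≤ cA) (ht : 0 < t)
    (hδ'0 : 0 < δ') (hd : 0 ≤ d) :
    cX * (cA * (t * (δ' / (2 * cX * cA * t)))) + cX * (cA * (d * (2 * (δ' / (2 * cX * cA * t)))))
      ≤ δ' * (1 + d * t⁻¹) := by
  have hcX0 : cX ≠ 0 := by linarith
  have hcA0 : cA ≠ 0 := by linarith
  have l1 : cX * (cA * (t * (δ' / (2 * cX * cA * t)))) = δ' / 2 := by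
    field_simp
  have l2 : cX * (cA * (d * (2 * (δ' / (2 * cX * cA * t))))) = d * δ' * t⁻¹ := by
    field_simp
  rw [l1, l2]
  have h3 : 0 ≤ d * δ' * t⁻¹ := by positivity
  have h4 : δ' * (1 + d * t⁻¹) = δ' + d * δ' * t⁻¹ := by ring
  rw [h4]
  linarith

set_option maxHeartbeats 1000000 in
/-- Construction of the plausible MDP set in the multi-objective setting: with the common
error function `e(x,a) = √((2/n(x,a))·log(2|X||A|2^{|X|}/δ'))`, both the transition L1
bounds and all `d` reward bounds hold simultaneously for all state-action pairs with total
failure probability at most `δ = δ'·(1 + d·2^{−|X|})`. -/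
theorem plausible_set_concentration
    {Ω : Type*} [MeasureSpace Ω] [IsProbabilityMeasure (ℙ : Measure Ω)]
    {X A : Type*} [Fintype X] [Fintype A] [Nonempty X] [Nonempty A] [DecidableEq X]
    [MeasurableSpace X] [MeasurableSingletonClass X]
    (d : ℕ) (hd : 0 < d)
    (rtop : ℝ) (hrtop : 0 < rtop)
    (δ' : ℝ) (hδ' : δ' ∈ Set.Ioo (0 : ℝ) 1)
    (hδ : δ' * (1 + d * ((2 : ℝ) ^ (Fintype.card X))⁻¹) < 1)
    (n : X × A → ℕ) (hn : ∀ xa, 1 ≤ n xa)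
    (pstar : X → A → PMF X)
    (Y : (x : X) → (a : A) → Fin (n (x, a)) → Ω → X)
    (hYmeas : ∀ x a i, Measurable (Y x a i))
    (hYindep : ∀ x a, iIndepFun (Y x a) ℙ)
    (hYlaw : ∀ x a i, Measure.map (Y x a i) ℙ = (pstar x a).toMeasure)
    (R : (x : X) → (a : A) → (k : Fin d) → Fin (n (x, a)) → Ω → ℝ)
    (rstar : X → A → Fin d → ℝ)
    (hRmeas : ∀ x a k i, Measurable (R x a k i))
    (hRindep : ∀ x a k, iIndepFun (R x a k) ℙ)
    (hRident : ∀ x a k i j, IdentDistrib (R x a k i) (R x a k j) ℙ ℙ)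
    (hRbdd : ∀ x a k i, ∀ᵐ ω ∂ℙ, |R x a k i ω| ≤ rtop)
    (hRmean : ∀ x a k i, ∫ ω, R x a k i ω ∂ℙ = rstar x a k)
    (e : X × A → ℝ)
    (he : ∀ xa : X × A, e xa
      = Real.sqrt ((2 / (n xa : ℝ)) *
          Real.log (2 * (Fintype.card X) * (Fintype.card A) * 2 ^ (Fintype.card X) / δ'))) :
    1 - ENNReal.ofReal (δ' * (1 + d * ((2 : ℝ) ^ (Fintype.card X))⁻¹))
      ≤ ℙ {ω | ∀ (x : X) (a : A),
          (∑ x' : X,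
              |(1 / (n (x, a) : ℝ)) *
                  ((Finset.univ.filter fun i : Fin (n (x, a)) => Y x a i ω = x').card : ℝ)
                - (pstar x a x').toReal|
            ≤ e (x, a))
          ∧ ∀ k : Fin d,
              |(1 / (n (x, a) : ℝ)) * ∑ i : Fin (n (x, a)), R x a k i ω - rstar x a k|
                ≤ e (x, a) * rtop} := by
  classical
  obtain ⟨hδ'0, hδ'1⟩ := hδ'
  set cX : ℝ := (Fintype.card X : ℝ) with hcXdef
  set cA : ℝ := (Fintype.card A : ℝ) with hcAdef
  have hcX : (1:ℝ) ≤ cX := by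
    simp only [hcXdef]
    exact_mod_cast Fintype.card_pos
  have hcA : (1:ℝ) ≤ cA := by
    simp only [hcAdef]
    exact_mod_cast Fintype.card_pos
  have h2c : (1:ℝ) ≤ 2 ^ (Fintype.card X) := one_le_pow₀ (by norm_num)
  set M : ℝ := 2 * cX * cA * 2 ^ (Fintype.card X) with hMdef
  have hMpos : 0 < M := by positivity
  have hM2 : (2:ℝ) ≤ M := by
    have h3 : (1:ℝ) ≤ cX * cA := by nlinarith
    have h4 : (1:ℝ) ≤ cX * cA * 2 ^ (Fintype.card X) := by nlinarith
    rw [hMdef]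
    nlinarith
  have hM1 : 1 < M / δ' := (one_lt_div hδ'0).2 (by linarith)
  have hL : 0 ≤ Real.log (M / δ') := Real.log_nonneg hM1.le
  have hN : ∀ xa : X × A, (0:ℝ) < (n xa : ℝ) := fun xa => by exact_mod_cast hn xa
  have he0 : ∀ xa, 0 ≤ e xa := fun xa => by rw [he xa]; exact Real.sqrt_nonneg _
  have hesq : ∀ xa, (e xa)^2 = (2 / (n xa : ℝ)) * Real.log (M / δ') := by
    intro xa
    rw [he xa, Real.sq_sqrt (mul_nonneg (by positivity) hL)]
  have hexp : ∀ xa : X × A, Real.exp (-((n xa : ℝ) * (e xa)^2) / 2) = δ' / M := by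
    intro xa
    have : -((n xa : ℝ) * (e xa)^2) / 2 = - Real.log (M / δ') := by
      rw [hesq xa]
      have hne : ((n xa : ℝ) * 2) ≠ 0 := (mul_pos (hN xa) two_pos).ne'
      have hn0 : (n xa : ℝ) ≠ 0 := (hN xa).ne'
      field_simp
    rw [this, Real.exp_neg, Real.exp_log (by positivity), inv_div]
  -- transition events
  set EP : (x : X) → (a : A) → Finset X → Set Ω := fun x a B =>
    {ω | (n (x,a) : ℝ) * (e (x,a) / 2)
      ≤ ∑ i, ((if Y x a i ω ∈ B then (1:ℝ) else 0) - ∑ x' ∈ B, (pstar x a x').toReal)} with hEPdef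
  set ERp : (x : X) → (a : A) → Fin d → Set Ω := fun x a k =>
    {ω | (n (x,a) : ℝ) * (e (x,a) * rtop) ≤ ∑ i, (R x a k i ω - rstar x a k)} with hERpdef
  set ERm : (x : X) → (a : A) → Fin d → Set Ω := fun x a k =>
    {ω | ∑ i, (R x a k i ω - rstar x a k) ≤ -((n (x,a) : ℝ) * (e (x,a) * rtop))} with hERmdef
  have hEP : ∀ x a B, ℙ (EP x a B) ≤ ENNReal.ofReal (δ' / M) := by
    intro x a B
    set pB : ℝ := ∑ x' ∈ B, (pstar x a x').toReal with hpBdef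
    set V : Fin (n (x,a)) → Ω → ℝ :=
      fun i ω => (if Y x a i ω ∈ B then (1:ℝ) else 0) - pB with hVdef
    have hg : Measurable (fun x' : X => if x' ∈ B then (1:ℝ) else 0) := measurable_of_countable _
    have hmeasV : ∀ i, Measurable (V i) := fun i =>
      (hg.comp (hYmeas x a i)).sub measurable_const
    have hindepV : iIndepFun V ℙ :=
      (hYindep x a).comp
        (fun _ => fun x' : X => (if x' ∈ B then (1:ℝ) else 0) - pB)
        (fun _ => measurable_of_countable _)
    have hbddV : ∀ i, ∀ᵐ ω ∂ℙ, V i ω ∈ Set.Icc (-pB) (1 - pB) := by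
      intro i
      refine Filter.Eventually.of_forall (fun ω => ?_)
      simp only [hVdef, Set.mem_Icc]
      constructor <;> split_ifs <;> norm_num
    have hmeanV : ∀ i, ∫ ω, V i ω ∂ℙ = 0 := by
      intro i
      have hind : ∫ ω, (if Y x a i ω ∈ B then (1:ℝ) else 0) ∂ℙ = pB := by
        have h1 : ∫ ω, (if Y x a i ω ∈ B then (1:ℝ) else 0) ∂ℙ
            = ∫ x', (if x' ∈ B then (1:ℝ) else 0) ∂(Measure.map (Y x a i) ℙ) :=
          (integral_map (hYmeas x a i).aemeasurable hg.aestronglyMeasurable).symm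
        rw [h1, hYlaw x a i, PMF.integral_eq_sum]
        simp only [smul_eq_mul, mul_ite, mul_one, mul_zero]
        rw [Finset.sum_ite_mem, Finset.univ_inter]
      have hint1 : Integrable (fun ω => (if Y x a i ω ∈ B then (1:ℝ) else 0)) ℙ := by
        refine Integrable.mono' (integrable_const 1)
          (hg.comp (hYmeas x a i)).aestronglyMeasurable ?_
        refine Filter.Eventually.of_forall (fun ω => ?_)
        rw [Real.norm_eq_abs]
        split_ifs <;> simp
      simp only [hVdef]
      rw [integral_sub hint1 (integrable_const pB), hind, integral_const]
      simp
    have htail := hoeffding_tail ℙ (hn (x,a)) V hmeasV hindepV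
      (show -pB < 1 - pB by linarith) hbddV hmeanV
      (mul_nonneg (hN (x,a)).le (by linarith [he0 (x,a)] :
        (0:ℝ) ≤ e (x,a) / 2))
    have hseteq : EP x a B = {ω | (n (x,a) : ℝ) * (e (x,a) / 2) ≤ ∑ i, V i ω} := rfl
    rw [hseteq]
    refine le_trans htail (le_of_eq ?_)
    rw [← hexp (x,a)]
    congr 1
    have hne : ((n (x,a):ℝ)) ≠ 0 := (hN (x,a)).ne'
    field_simp
    ring
  have hRstuff : ∀ (x : X) (a : A) (k : Fin d),
      (∀ i, Measurable (fun ω => R x a k i ω - rstar x a k)) ∧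
      iIndepFun (fun i => fun ω => R x a k i ω - rstar x a k) ℙ ∧
      (∀ i, ∀ᵐ ω ∂ℙ, R x a k i ω - rstar x a k
        ∈ Set.Icc (-rtop - rstar x a k) (rtop - rstar x a k)) ∧
      (∀ i, ∫ ω, (R x a k i ω - rstar x a k) ∂ℙ = 0) := by
    intro x a k
    refine ⟨fun i => (hRmeas x a k i).sub measurable_const, ?_, ?_, ?_⟩
    · exact (hRindep x a k).comp (fun _ => fun r => r - rstar x a k)
        (fun _ => measurable_id.sub measurable_const)
    · intro i
      filter_upwards [hRbdd x a k i] with ω h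
      obtain ⟨h1, h2⟩ := abs_le.1 h
      exact ⟨by linarith, by linarith⟩
    · intro i
      have hRint : Integrable (R x a k i) ℙ := by
        refine Integrable.mono' (integrable_const rtop)
          (hRmeas x a k i).aestronglyMeasurable ?_
        filter_upwards [hRbdd x a k i] with ω h
        rwa [Real.norm_eq_abs]
      rw [integral_sub hRint (integrable_const _), hRmean x a k i, integral_const]
      simp
  have hepsR : ∀ (x : X) (a : A), (0:ℝ) ≤ (n (x,a):ℝ) * (e (x,a) * rtop) := fun x a =>
    mul_nonneg (hN (x,a)).le (mul_nonneg (he0 (x,a)) hrtop.le)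
  have hERp : ∀ x a k, ℙ (ERp x a k) ≤ ENNReal.ofReal (δ' / M) := by
    intro x a k
    obtain ⟨hm, hi, hb, hz⟩ := hRstuff x a k
    have htail := hoeffding_tail ℙ (hn (x,a)) _ hm hi
      (show -rtop - rstar x a k < rtop - rstar x a k by linarith) hb hz (hepsR x a)
    refine le_trans htail (le_of_eq ?_)
    rw [← hexp (x,a)]
    congr 1
    have hne : ((n (x,a):ℝ)) ≠ 0 := (hN (x,a)).ne'
    have h2r : ((rtop - rstar x a k) - (-rtop - rstar x a k)) = 2*rtop := by ring
    rw [h2r]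
    field_simp
  have hERm : ∀ x a k, ℙ (ERm x a k) ≤ ENNReal.ofReal (δ' / M) := by
    intro x a k
    obtain ⟨hm, hi, hb, hz⟩ := hRstuff x a k
    have htail := hoeffding_tail_lower ℙ (hn (x,a)) _ hm hi
      (show -rtop - rstar x a k < rtop - rstar x a k by linarith) hb hz (hepsR x a)
    refine le_trans htail (le_of_eq ?_)
    rw [← hexp (x,a)]
    congr 1
    have hne : ((n (x,a):ℝ)) ≠ 0 := (hN (x,a)).ne'
    have h2r : ((rtop - rstar x a k) - (-rtop - rstar x a k)) = 2*rtop := by ring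
    rw [h2r]
    field_simp
  set good : Set Ω := {ω | ∀ (x : X) (a : A),
          (∑ x' : X,
              |(1 / (n (x, a) : ℝ)) *
                  ((Finset.univ.filter fun i : Fin (n (x, a)) => Y x a i ω = x').card : ℝ)
                - (pstar x a x').toReal|
            ≤ e (x, a))
          ∧ ∀ k : Fin d,
              |(1 / (n (x, a) : ℝ)) * ∑ i : Fin (n (x, a)), R x a k i ω - rstar x a k|
                ≤ e (x, a) * rtop} with hgooddef
  set bad : Set Ω := (⋃ x, ⋃ a, ⋃ B : Finset X, EP x a B)
      ∪ (⋃ x, ⋃ a, ⋃ k, ERp x a k ∪ ERm x a k) with hbaddef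
  have hsubset : goodᶜ ⊆ bad := by
    intro ω hω
    rw [Set.mem_compl_iff] at hω
    simp only [hgooddef, Set.mem_setOf_eq, not_forall] at hω
    obtain ⟨x, a, hxa⟩ := hω
    rw [not_and_or] at hxa
    have hNpos : (0:ℝ) < (n (x,a) : ℝ) := hN (x,a)
    rcases hxa with hP | hR
    · -- transition L1 failure
      have hPlt : e (x,a) < ∑ x' : X,
          |(1 / (n (x, a) : ℝ)) * ((Finset.univ.filter
              fun i : Fin (n (x, a)) => Y x a i ω = x').card : ℝ)
            - (pstar x a x').toReal| := not_le.1 hP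
      set cf : X → ℝ := fun x' => ((Finset.univ.filter
          fun i : Fin (n (x, a)) => Y x a i ω = x').card : ℝ) with hcf
      set dlt : X → ℝ := fun x' =>
        (1 / (n (x, a) : ℝ)) * cf x' - (pstar x a x').toReal with hdlt
      have hPlt2 : e (x,a) < ∑ x' : X, |dlt x'| := hPlt
      have hcardtot : ∑ x' : X, cf x' = (n (x,a) : ℝ) := by
        have h := Finset.card_eq_sum_card_fiberwise
          (f := fun i : Fin (n (x,a)) => Y x a i ω) (s := Finset.univ) (t := Finset.univ)
          (fun _ _ => Finset.mem_univ _)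
        simp only [hcf]
        rw [← Nat.cast_sum]
        rw [← h, Finset.card_univ, Fintype.card_fin]
      have hsum1 : ∑ x' : X, (pstar x a x').toReal = 1 := by
        have h := (pstar x a).tsum_coe
        rw [tsum_fintype] at h
        have h2 := congrArg ENNReal.toReal h
        rw [ENNReal.toReal_sum (fun x' _ => PMF.apply_ne_top _ _)] at h2
        simpa using h2
      have hzero : ∑ x' : X, dlt x' = 0 := by
        simp only [hdlt]
        rw [Finset.sum_sub_distrib, ← Finset.mul_sum, hcardtot, hsum1]
        field_simp; ring
      have hkey := abs_sum_split dlt hzero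
      set B : Finset X := Finset.univ.filter (fun x' => 0 < dlt x') with hBdef
      have hgt : e (x,a) / 2 < ∑ x' ∈ B, dlt x' := by
        rw [hkey] at hPlt2
        linarith
      have hcardB : ((Finset.univ.filter fun i : Fin (n (x,a)) => Y x a i ω ∈ B).card : ℝ)
          = ∑ x' ∈ B, cf x' := by
        have h := Finset.card_eq_sum_card_fiberwise
          (f := fun i : Fin (n (x,a)) => Y x a i ω)
          (s := Finset.univ.filter fun i => Y x a i ω ∈ B) (t := B)
          (fun i hi => (Finset.mem_filter.1 hi).2)
        have h2 : ∀ x' ∈ B, ((Finset.univ.filter fun i : Fin (n (x,a)) => Y x a i ω ∈ B).filter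
            (fun i => Y x a i ω = x')).card
            = (Finset.univ.filter fun i : Fin (n (x,a)) => Y x a i ω = x').card := by
          intro x' hx'
          congr 1
          rw [Finset.filter_filter]
          apply Finset.filter_congr
          intro i _
          constructor
          · exact fun hh => hh.2
          · exact fun hh => ⟨hh ▸ hx', hh⟩
        rw [h, Finset.sum_congr rfl h2]
        simp only [hcf]
        rw [Nat.cast_sum]
      have hmem : ω ∈ EP x a B := by
        show (n (x,a) : ℝ) * (e (x,a) / 2)
          ≤ ∑ i : Fin (n (x,a)),
            ((if Y x a i ω ∈ B then (1:ℝ) else 0) - ∑ x' ∈ B, (pstar x a x').toReal)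
        have hsplit : ∑ i : Fin (n (x,a)),
            ((if Y x a i ω ∈ B then (1:ℝ) else 0) - ∑ x' ∈ B, (pstar x a x').toReal)
            = ((Finset.univ.filter fun i : Fin (n (x,a)) => Y x a i ω ∈ B).card : ℝ)
              - (n (x,a) : ℝ) * ∑ x' ∈ B, (pstar x a x').toReal := by
          rw [Finset.sum_sub_distrib, Finset.sum_boole, Finset.sum_const, Finset.card_univ,
            Fintype.card_fin]
          simp [nsmul_eq_mul]
        rw [hsplit, hcardB]
        have hexpand : ∑ x' ∈ B, cf x' - (n (x,a):ℝ) * ∑ x' ∈ B, (pstar x a x').toReal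
            = (n (x,a):ℝ) * ∑ x' ∈ B, dlt x' := by
          rw [Finset.mul_sum, Finset.mul_sum, ← Finset.sum_sub_distrib]
          apply Finset.sum_congr rfl
          intro x' _
          simp only [hdlt]
          field_simp
        rw [hexpand]
        exact mul_le_mul_of_nonneg_left hgt.le hNpos.le
      exact Or.inl (Set.mem_iUnion.2 ⟨x, Set.mem_iUnion.2 ⟨a, Set.mem_iUnion.2 ⟨B, hmem⟩⟩⟩)
    · -- reward failure
      push_neg at hR
      obtain ⟨k, hk⟩ := hR
      have hsum : ∑ i : Fin (n (x,a)), (R x a k i ω - rstar x a k)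
          = (n (x,a):ℝ) * ((1/(n (x,a):ℝ)) * (∑ i : Fin (n (x,a)), R x a k i ω) - rstar x a k) := by
        rw [Finset.sum_sub_distrib, Finset.sum_const, Finset.card_univ, Fintype.card_fin]
        simp only [nsmul_eq_mul]
        field_simp
      rcases lt_abs.1 hk with hcase | hcase
      · have hmem : ω ∈ ERp x a k := by
          show (n (x,a):ℝ) * (e (x,a) * rtop) ≤ ∑ i : Fin (n (x,a)), (R x a k i ω - rstar x a k)
          rw [hsum]
          exact mul_le_mul_of_nonneg_left hcase.le hNpos.le
        exact Or.inr (Set.mem_iUnion.2 ⟨x, Set.mem_iUnion.2 ⟨a, Set.mem_iUnion.2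
          ⟨k, Or.inl hmem⟩⟩⟩)
      · have hmem : ω ∈ ERm x a k := by
          show ∑ i : Fin (n (x,a)), (R x a k i ω - rstar x a k)
            ≤ -((n (x,a):ℝ) * (e (x,a) * rtop))
          rw [hsum]
          have := mul_le_mul_of_nonneg_left hcase.le hNpos.le
          nlinarith
        exact Or.inr (Set.mem_iUnion.2 ⟨x, Set.mem_iUnion.2 ⟨a, Set.mem_iUnion.2
          ⟨k, Or.inr hmem⟩⟩⟩)
  have hbad : ℙ bad ≤ ENNReal.ofReal (δ' * (1 + d * ((2 : ℝ) ^ (Fintype.card X))⁻¹)) := by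
    have hpart1 : ℙ (⋃ x, ⋃ a, ⋃ B : Finset X, EP x a B)
        ≤ ENNReal.ofReal ((Fintype.card X : ℝ) * ((Fintype.card A : ℝ) *
          ((Fintype.card (Finset X) : ℝ) * (δ' / M)))) := by
      refine union_bound_fintype ℙ _ (fun x => ?_)
      refine union_bound_fintype ℙ _ (fun a => ?_)
      exact union_bound_fintype ℙ _ (fun B => hEP x a B)
    have hpair : ∀ (x : X) (a : A) (k : Fin d),
        ℙ (ERp x a k ∪ ERm x a k) ≤ ENNReal.ofReal (2 * (δ' / M)) := by
      intro x a k
      refine le_trans (measure_union_le _ _) ?_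
      have := add_le_add (hERp x a k) (hERm x a k)
      refine le_trans this (le_of_eq ?_)
      rw [← ENNReal.ofReal_add (by positivity) (by positivity)]
      congr 1
      ring
    have hpart2 : ℙ (⋃ x, ⋃ a, ⋃ k, ERp x a k ∪ ERm x a k)
        ≤ ENNReal.ofReal ((Fintype.card X : ℝ) * ((Fintype.card A : ℝ) *
          ((d : ℝ) * (2 * (δ' / M))))) := by
      refine union_bound_fintype ℙ _ (fun x => ?_)
      refine union_bound_fintype ℙ _ (fun a => ?_)
      have := union_bound_fintype ℙ _ (fun k => hpair x a k)
      rwa [Fintype.card_fin] at this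
    have hsum := le_trans (measure_union_le _ _) (add_le_add hpart1 hpart2)
    refine le_trans hsum ?_
    rw [← ENNReal.ofReal_add (by positivity) (by positivity)]
    apply ENNReal.ofReal_le_ofReal
    rw [Fintype.card_finset]
    rw [← hcXdef, ← hcAdef]
    have hcX0 : cX ≠ 0 := by linarith
    have hcA0 : cA ≠ 0 := by linarith
    have h2c0 : ((2:ℝ) ^ (Fintype.card X)) ≠ 0 := by positivity
    have hcast2 : ((2 ^ (Fintype.card X) : ℕ) : ℝ) = (2:ℝ) ^ (Fintype.card X) := by push_cast; ring
    rw [hcast2, hMdef]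
    exact final_real_ineq cX cA _ δ' (d:ℝ) hcX hcA (by positivity) hδ'0 (Nat.cast_nonneg d)
  have h1 : (1:ℝ≥0∞) ≤ ℙ good + ℙ bad := by
    calc (1:ℝ≥0∞) = ℙ (good ∪ goodᶜ) := by rw [Set.union_compl_self]; simp
    _ ≤ ℙ good + ℙ goodᶜ := measure_union_le _ _
    _ ≤ ℙ good + ℙ bad := add_le_add_right (measure_mono hsubset) _
  rw [tsub_le_iff_right]
  calc (1:ℝ≥0∞) ≤ ℙ good + ℙ bad := h1
  _ ≤ ℙ good + ENNReal.ofReal (δ' * (1 + d * ((2 : ℝ) ^ (Fintype.card X))⁻¹)) :=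
      add_le_add_right hbad _
end

section
/- (Performance Difference Lemma.) In the finite MDP setup, for every pair of policies π and π_b and every bounded reward r : X → A → ℝ: J^{π}_{r,p} − J^{π_b}_{r,p} = Σ_{s∈X} d^π(s)·Σ_{a∈A} π(a|s)·A^{π_b}_{r,p}(s,a), where d^π is the discounted state occupancy of π started from x0. -/
open scoped BigOperators

namespace MOSPIBB

variable {X A : Type*} [Fintype X] [Fintype A]

/-- Time-`t` state distribution of policy `π` started at `x`. -/
noncomputable def stateDist (p : X → A → PMF X) (π : X → PMF A) (x : X) : ℕ → PMF X
  | 0 => PMF.pure x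
  | t + 1 => (stateDist p π x t).bind fun s => (π s).bind (p s)

/-- Value function. -/
noncomputable def V (p : X → A → PMF X) (γ : ℝ) (r : X → A → ℝ) (π : X → PMF A) (x : X) : ℝ :=
  ∑' t : ℕ, γ ^ t * ∑ s : X, ∑ a : A, (stateDist p π x t s).toReal * (π s a).toReal * r s a

/-- State-action value function. -/
noncomputable def Q (p : X → A → PMF X) (γ : ℝ) (r : X → A → ℝ) (π : X → PMF A) (x : X) (a : A) : ℝ :=
  r x a + γ * ∑ x' : X, (p x a x').toReal * V p γ r π x'

/-- Advantage function. -/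
noncomputable def Adv (p : X → A → PMF X) (γ : ℝ) (r : X → A → ℝ) (π : X → PMF A) (x : X) (a : A) : ℝ :=
  Q p γ r π x a - V p γ r π x

/-- Return from the initial state `x0`. -/
noncomputable def J (p : X → A → PMF X) (γ : ℝ) (r : X → A → ℝ) (π : X → PMF A) (x0 : X) : ℝ :=
  V p γ r π x0

/-- Discounted state occupancy. -/
noncomputable def dOcc (p : X → A → PMF X) (γ : ℝ) (π : X → PMF A) (x0 : X) (s : X) : ℝ :=
  ∑' t : ℕ, γ ^ t * (stateDist p π x0 t s).toReal

/-- Discounted state-action occupancy. -/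
noncomputable def rhoOcc (p : X → A → PMF X) (γ : ℝ) (π : X → PMF A) (x0 : X) (s : X) (a : A) : ℝ :=
  ∑' t : ℕ, γ ^ t * (stateDist p π x0 t s).toReal * (π s a).toReal

end MOSPIBB
section PDLHelpers

open MOSPIBB

variable {X A : Type*} [Fintype X] [Fintype A]

lemma pdl_toReal_sum_pmf {Y : Type*} [Fintype Y] (q : PMF Y) :
    ∑ y : Y, (q y).toReal = 1 := by
  have h : ∑ y : Y, q y = 1 := by have h0 := q.tsum_coe; rwa [tsum_fintype] at h0
  rw [← ENNReal.toReal_sum (fun y _ => q.apply_ne_top y), h, ENNReal.toReal_one]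

lemma pdl_stateDist_succ (p : X → A → PMF X) (π : X → PMF A) (x : X) (t : ℕ) (s' : X) :
    (stateDist p π x (t+1) s').toReal
      = ∑ s : X, ∑ a : A,
          (stateDist p π x t s).toReal * ((π s a).toReal * (p s a s').toReal) := by
  show (((stateDist p π x t).bind fun s => (π s).bind (p s)) s').toReal = _
  rw [PMF.bind_apply, tsum_fintype,
    ENNReal.toReal_sum (fun s _ => ENNReal.mul_ne_top ((stateDist p π x t).apply_ne_top s)
      (PMF.apply_ne_top _ s'))]
  refine Finset.sum_congr rfl fun s _ => ?_
  rw [ENNReal.toReal_mul, PMF.bind_apply, tsum_fintype,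
    ENNReal.toReal_sum (fun a _ => ENNReal.mul_ne_top ((π s).apply_ne_top a)
      ((p s a).apply_ne_top s')), Finset.mul_sum]
  refine Finset.sum_congr rfl fun a _ => ?_
  rw [ENNReal.toReal_mul]

lemma pdl_step_abs_le {rtop : ℝ} (r : X → A → ℝ) (hr : ∀ s a, |r s a| ≤ rtop)
    (μ : PMF X) (π : X → PMF A) :
    |∑ s : X, ∑ a : A, (μ s).toReal * (π s a).toReal * r s a| ≤ rtop := by
  have h1 : |∑ s : X, ∑ a : A, (μ s).toReal * (π s a).toReal * r s a|
      ≤ ∑ s : X, ∑ a : A, (μ s).toReal * (π s a).toReal * rtop := by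
    refine (Finset.abs_sum_le_sum_abs _ _).trans (Finset.sum_le_sum fun s _ => ?_)
    refine (Finset.abs_sum_le_sum_abs _ _).trans (Finset.sum_le_sum fun a _ => ?_)
    rw [abs_mul, abs_mul, abs_of_nonneg ENNReal.toReal_nonneg,
      abs_of_nonneg ENNReal.toReal_nonneg]
    exact mul_le_mul_of_nonneg_left (hr s a)
      (mul_nonneg ENNReal.toReal_nonneg ENNReal.toReal_nonneg)
  calc _ ≤ _ := h1
    _ = rtop := by
        have : ∀ s : X, ∑ a : A, (μ s).toReal * (π s a).toReal * rtop
            = (μ s).toReal * rtop := by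
          intro s
          rw [← Finset.sum_mul, ← Finset.mul_sum, pdl_toReal_sum_pmf, mul_one]
        simp_rw [this]
        rw [← Finset.sum_mul, pdl_toReal_sum_pmf, one_mul]

lemma pdl_summable_term {γ : ℝ} (hγ0 : 0 ≤ γ) (hγ1 : γ < 1) {C : ℝ}
    {g : ℕ → ℝ} (hg : ∀ t, |g t| ≤ C) :
    Summable (fun t : ℕ => γ ^ t * g t) := by
  refine Summable.of_norm_bounded
    ((summable_geometric_of_lt_one hγ0 hγ1).mul_left C) fun t => ?_
  rw [Real.norm_eq_abs, abs_mul, abs_of_nonneg (pow_nonneg hγ0 t)]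
  calc γ ^ t * |g t| ≤ γ ^ t * C := by
        exact mul_le_mul_of_nonneg_left (hg t) (pow_nonneg hγ0 t)
    _ = C * γ ^ t := mul_comm _ _

lemma pdl_V_abs_le {rtop : ℝ} (hrtop : 0 ≤ rtop) (p : X → A → PMF X) {γ : ℝ}
    (hγ0 : 0 ≤ γ) (hγ1 : γ < 1) (r : X → A → ℝ) (hr : ∀ s a, |r s a| ≤ rtop)
    (π : X → PMF A) (x : X) : |V p γ r π x| ≤ rtop * (1 - γ)⁻¹ := by
  have hb : ∀ t : ℕ, |∑ s : X, ∑ a : A,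
      (stateDist p π x t s).toReal * (π s a).toReal * r s a| ≤ rtop :=
    fun t => pdl_step_abs_le r hr _ π
  have hsum := pdl_summable_term hγ0 hγ1 hb
  have habs : Summable (fun t : ℕ => ‖γ ^ t * ∑ s : X, ∑ a : A,
      (stateDist p π x t s).toReal * (π s a).toReal * r s a‖) := hsum.abs
  calc |V p γ r π x| ≤ ∑' t : ℕ, ‖γ ^ t * ∑ s : X, ∑ a : A,
        (stateDist p π x t s).toReal * (π s a).toReal * r s a‖ :=
        norm_tsum_le_tsum_norm habs
    _ ≤ ∑' t : ℕ, rtop * γ ^ t := by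
        refine Summable.tsum_le_tsum (fun t => ?_) habs
          ((summable_geometric_of_lt_one hγ0 hγ1).mul_left rtop)
        rw [Real.norm_eq_abs, abs_mul, abs_of_nonneg (pow_nonneg hγ0 t), mul_comm]
        exact mul_le_mul_of_nonneg_right (hb t) (pow_nonneg hγ0 t)
    _ = rtop * (1 - γ)⁻¹ := by
        rw [tsum_mul_left, tsum_geometric_of_lt_one hγ0 hγ1]

end PDLHelpers
set_option maxHeartbeats 1000000 in
open MOSPIBB in
/-- Performance Difference Lemma (Kakade & Langford):
`J^π - J^{π_b} = Σ_s d^π(s) · Σ_a π(a|s) · A^{π_b}(s,a)`. -/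
theorem performance_difference_lemma
    {X A : Type*} [Fintype X] [Fintype A] [Nonempty X] [Nonempty A]
    (p : X → A → PMF X) (γ : ℝ) (hγ0 : 0 ≤ γ) (hγ1 : γ < 1) (x0 : X)
    (rtop : ℝ) (hrtop : 0 ≤ rtop)
    (r : X → A → ℝ) (hr : ∀ s a, |r s a| ≤ rtop)
    (π πb : X → PMF A) :
    J p γ r π x0 - J p γ r πb x0
      = ∑ s : X, dOcc p γ π x0 s *
          ∑ a : A, (π s a).toReal * Adv p γ r πb s a := by
  classical
  set M : ℝ := rtop * (1 - γ)⁻¹ with hM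
  have hγt : ∀ t : ℕ, (0:ℝ) ≤ γ ^ t := fun t => pow_nonneg hγ0 t
  set μ : ℕ → PMF X := stateDist p π x0 with hμ
  set W : X → ℝ := fun s => V p γ r πb s with hWdef
  have hW : ∀ x, V p γ r πb x = W x := fun x => rfl
  have hWb : ∀ s, |W s| ≤ M := fun s => pdl_V_abs_le hrtop p hγ0 hγ1 r hr πb s
  set R : ℕ → ℝ := fun t => ∑ s : X, ∑ a : A,
    (μ t s).toReal * (π s a).toReal * r s a with hRdef
  set E : ℕ → ℝ := fun t => ∑ s : X, (μ t s).toReal * W s with hEdef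
  set C : X → ℝ := fun s => ∑ a : A, (π s a).toReal * Adv p γ r πb s a with hCdef
  have hEb : ∀ t, |E t| ≤ M := by
    intro t
    calc |E t| ≤ ∑ s : X, (μ t s).toReal * M := by
          refine (Finset.abs_sum_le_sum_abs _ _).trans (Finset.sum_le_sum fun s _ => ?_)
          rw [abs_mul, abs_of_nonneg ENNReal.toReal_nonneg]
          exact mul_le_mul_of_nonneg_left (hWb s) ENNReal.toReal_nonneg
      _ = M := by rw [← Finset.sum_mul, pdl_toReal_sum_pmf, one_mul]
  have hRb : ∀ t, |R t| ≤ rtop := fun t => pdl_step_abs_le r hr (μ t) π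
  have hsumR : Summable (fun t => γ ^ t * R t) := pdl_summable_term hγ0 hγ1 hRb
  have hsumE : Summable (fun t => γ ^ t * E t) := pdl_summable_term hγ0 hγ1 hEb
  have hsumE' : Summable (fun t => γ ^ (t+1) * E (t+1)) :=
    (summable_nat_add_iff 1).mpr hsumE
  have hμle1 : ∀ t s, (μ t s).toReal ≤ 1 := by
    intro t s
    have h := Finset.single_le_sum (f := fun s => (μ t s).toReal)
      (fun i _ => ENNReal.toReal_nonneg) (Finset.mem_univ s)
    rwa [pdl_toReal_sum_pmf] at h
  -- key per-step identity
  have key : ∀ t : ℕ, (∑ s : X, (μ t s).toReal * C s)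
      = R t + γ * E (t+1) - E t := by
    intro t
    have h1 : ∀ s : X, C s
        = (∑ a : A, (π s a).toReal * Q p γ r πb s a) - W s := by
      intro s
      show ∑ a : A, (π s a).toReal * Adv p γ r πb s a = _
      simp only [Adv, mul_sub, hW]
      rw [Finset.sum_sub_distrib, ← Finset.sum_mul, pdl_toReal_sum_pmf, one_mul]
    have h2 : ∑ s : X, (μ t s).toReal * ∑ a : A, (π s a).toReal * Q p γ r πb s a
        = R t + γ * E (t+1) := by
      have hE1 : E (t+1) = ∑ s : X, ∑ a : A, ∑ x' : X,
          (μ t s).toReal * ((π s a).toReal * ((p s a x').toReal * W x')) := by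
        show ∑ x' : X, (μ (t+1) x').toReal * W x' = _
        have : ∀ x' : X, (μ (t+1) x').toReal * W x'
            = ∑ s : X, ∑ a : A,
              (μ t s).toReal * ((π s a).toReal * ((p s a x').toReal * W x')) := by
          intro x'
          rw [show μ (t+1) = stateDist p π x0 (t+1) from rfl,
            pdl_stateDist_succ p π x0 t x', Finset.sum_mul]
          refine Finset.sum_congr rfl fun s _ => ?_
          rw [Finset.sum_mul]
          refine Finset.sum_congr rfl fun a _ => ?_
          ring
        simp_rw [this]
        rw [Finset.sum_comm]
        exact Finset.sum_congr rfl fun s _ => Finset.sum_comm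
      have expand : ∀ s : X,
          (μ t s).toReal * ∑ a : A, (π s a).toReal * Q p γ r πb s a
          = (∑ a : A, (μ t s).toReal * (π s a).toReal * r s a)
            + γ * ∑ a : A, ∑ x' : X,
              (μ t s).toReal * ((π s a).toReal * ((p s a x').toReal * W x')) := by
        intro s
        simp only [Q, hW]
        rw [Finset.mul_sum, Finset.mul_sum, ← Finset.sum_add_distrib]
        refine Finset.sum_congr rfl fun a _ => ?_
        simp_rw [← Finset.mul_sum]
        ring
      simp_rw [expand]
      rw [Finset.sum_add_distrib, ← Finset.mul_sum, hE1]
    simp_rw [h1, mul_sub, Finset.sum_sub_distrib, h2]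
    rfl
  -- rewrite RHS as a tsum
  have hsumC : ∀ s : X, Summable (fun t : ℕ => γ ^ t * (μ t s).toReal * C s) := by
    intro s
    have : ∀ t : ℕ, |(μ t s).toReal * C s| ≤ |C s| := by
      intro t
      rw [abs_mul, abs_of_nonneg (ENNReal.toReal_nonneg)]
      calc (μ t s).toReal * |C s| ≤ 1 * |C s| :=
            mul_le_mul_of_nonneg_right (hμle1 t s) (abs_nonneg _)
        _ = |C s| := one_mul _
    simpa [mul_assoc] using pdl_summable_term hγ0 hγ1 this
  have hRHS : (∑ s : X, dOcc p γ π x0 s * C s)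
      = ∑' t : ℕ, γ ^ t * (R t + γ * E (t+1) - E t) := by
    have h4 : ∀ s : X, dOcc p γ π x0 s * C s
        = ∑' t : ℕ, γ ^ t * (μ t s).toReal * C s := by
      intro s
      show (∑' t : ℕ, γ ^ t * (μ t s).toReal) * C s = _
      rw [← tsum_mul_right]
    simp_rw [h4]
    rw [← Summable.tsum_finsetSum (fun s _ => hsumC s)]
    refine tsum_congr fun t => ?_
    rw [← key t, Finset.mul_sum]
    refine Finset.sum_congr rfl fun s _ => ?_
    ring
  -- telescoping
  have htel : ∑' t : ℕ, (γ ^ (t+1) * E (t+1) - γ ^ t * E t) = -(E 0) := by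
    have hs : Summable (fun t : ℕ => γ ^ (t+1) * E (t+1) - γ ^ t * E t) :=
      hsumE'.sub hsumE
    have hf0 : Filter.Tendsto (fun n : ℕ => γ ^ n * E n) Filter.atTop (nhds 0) := by
      refine squeeze_zero_norm (a := fun n => M * γ ^ n) (fun n => ?_) ?_
      · rw [Real.norm_eq_abs, abs_mul, abs_of_nonneg (hγt n)]
        calc γ ^ n * |E n| ≤ γ ^ n * M :=
              mul_le_mul_of_nonneg_left (hEb n) (hγt n)
          _ = M * γ ^ n := mul_comm _ _
      · simpa using (tendsto_pow_atTop_nhds_zero_of_lt_one hγ0 hγ1).const_mul M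
    have hhs : HasSum (fun t : ℕ => γ ^ (t+1) * E (t+1) - γ ^ t * E t)
        (-(E 0)) := by
      rw [hs.hasSum_iff_tendsto_nat]
      have heq : ∀ n : ℕ, ∑ i ∈ Finset.range n, (γ ^ (i+1) * E (i+1) - γ ^ i * E i)
          = γ ^ n * E n - E 0 := fun n => by
        simpa using Finset.sum_range_sub (fun t => γ ^ t * E t) n
      simp_rw [heq]
      simpa using hf0.sub_const (E 0)
    exact hhs.tsum_eq
  have hE0 : E 0 = W x0 := by
    have hμ0 : μ 0 = PMF.pure x0 := by simp [hμ, stateDist]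
    show ∑ s : X, (μ 0 s).toReal * W s = W x0
    rw [hμ0]
    simp [PMF.pure_apply, apply_ite ENNReal.toReal]
  -- assemble
  have hsplit : ∑' t : ℕ, γ ^ t * (R t + γ * E (t+1) - E t)
      = (∑' t : ℕ, γ ^ t * R t) + ∑' t : ℕ, (γ ^ (t+1) * E (t+1) - γ ^ t * E t) := by
    rw [← Summable.tsum_add hsumR (hsumE'.sub hsumE)]
    refine tsum_congr fun t => ?_
    rw [pow_succ]
    ring
  have hJπ : J p γ r π x0 = ∑' t : ℕ, γ ^ t * R t := rfl
  have hJπb : J p γ r πb x0 = W x0 := rfl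
  rw [show (∑ s : X, dOcc p γ π x0 s * ∑ a : A, (π s a).toReal * Adv p γ r πb s a)
      = ∑ s : X, dOcc p γ π x0 s * C s from rfl,
    hRHS, hsplit, htel, hE0, hJπ, hJπb]
  ring
end
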